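/- Let n > 1 and l ≥ 1 be integers. Then there exist a function f : ℝⁿ → ℝˡ in 1-AC(ℝⁿ,ℝˡ) which is differentiable almost everywhere, and a set U ⊆ ℝⁿ with ℒⁿ(U) = 0 and ℒˡ(f(U)) > 0. In particular f does not have the Luzin (N) property. -/

import Mathlib

open MeasureTheory Metric Set Filter

noncomputable section

/-- The closed interval (box) `[a,b]` in `ℝⁿ`. -/
def box {n : ℕ} (a b : EuclideanSpace ℝ (Fin n)) : Set (EuclideanSpace ℝ (Fin n)) :=
  {x | ∀ ν, a ν ≤ x ν ∧ x ν ≤ b ν}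

/-- `f` is 1-absolutely continuous on `ℝⁿ`: for every `ε > 0` there is `δ > 0` such that
for every finite collection of pairwise disjoint 1-regular intervals (cubes)
`[aᵢ,bᵢ] ⊆ ℝⁿ`, `∑ ℒⁿ([aᵢ,bᵢ]) < δ` implies `∑ |f(bᵢ) − f(aᵢ)|ⁿ < ε`. -/
def OneAC {n l : ℕ} (f : EuclideanSpace ℝ (Fin n) → EuclideanSpace ℝ (Fin l)) : Prop :=
  ∀ ε > 0, ∃ δ > 0, ∀ (k : ℕ) (a b : Fin k → EuclideanSpace ℝ (Fin n)),
    (∀ i, ∀ ν, a i ν ≤ b i ν) →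
    (Pairwise fun i j => Disjoint (box (a i) (b i)) (box (a j) (b j))) →
    (∀ i, (⨆ ν, |a i ν - b i ν|) ^ n ≤ (volume (box (a i) (b i))).toReal) →
    ∑ i, (volume (box (a i) (b i))).toReal < δ →
    ∑ i, ‖f (b i) - f (a i)‖ ^ n < ε

/-!
Let `C` be the Cantor set, a closed null set of the cardinality of the continuum, and let
`g : ℝ → ℝˡ` vanish off `C` and map `C` onto `ℝˡ`. Put `f x = g (x₁ - x₀)`. Opposite corners
`a ≤ b` of a cube differ by a multiple of `(1, …, 1)`, so `f b = f a` and `f` is 1-AC for trivial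
reasons. Off the null slab `U = {x | x₁ - x₀ ∈ C}` the function `f` vanishes near every point,
so it is differentiable there, while `f '' U = g '' C = ℝˡ`.
-/

open scoped Cardinal Pointwise Topology

universe u

lemma volume_image_add_div_three (c : ℝ) (s : Set ℝ) :
    volume ((fun x ↦ (c + x) / 3) '' s) = volume s / 3 := by
  have : (fun x : ℝ ↦ (c + x) / 3) '' s = (3 : ℝ)⁻¹ • (c +ᵥ s) := by
    rw [← Set.image_smul, ← Set.image_vadd, Set.image_image]
    simp [div_eq_inv_mul]
  rw [this, Measure.addHaar_smul, measure_vadd]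
  simp [ENNReal.div_eq_inv_mul, ENNReal.ofReal_inv_of_pos]

lemma volume_preCantorSet_le (n : ℕ) : volume (preCantorSet n) ≤ (2 / 3) ^ n := by
  induction n with
  | zero => simp
  | succ n ih =>
    -- `preCantorSet_succ` writes the left third as `(· / 3) '' _`, the case `c = 0` below
    calc volume (preCantorSet (n + 1))
        ≤ volume ((fun x ↦ (0 + x) / 3) '' preCantorSet n)
          + volume ((fun x ↦ (2 + x) / 3) '' preCantorSet n) := by
          simpa using measure_union_le _ _
      _ ≤ (2 / 3) ^ n / 3 + (2 / 3) ^ n / 3 := by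
          simp only [volume_image_add_div_three]
          gcongr
      _ = (2 / 3) ^ (n + 1) := by
          rw [ENNReal.div_add_div_same, pow_succ, ← two_mul, mul_comm, mul_div_assoc]

lemma volume_cantorSet : volume cantorSet = 0 := by
  refine le_antisymm (ge_of_tendsto' (ENNReal.tendsto_pow_atTop_nhds_zero_of_lt_one ?_)
    fun n ↦ (measure_mono (iInter_subset _ n)).trans (volume_preCantorSet_le n)) zero_le
  exact ENNReal.div_lt_of_lt_mul (by norm_num)

lemma Cardinal.mk_cantorSet : #cantorSet = 𝔠 := by
  simp [Cardinal.mk_congr cantorSetEquivNatToBool]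

lemma Cardinal.mk_euclideanSpace_le (l : ℕ) : #(EuclideanSpace ℝ (Fin l)) ≤ 𝔠 := by
  rw [Cardinal.mk_congr (WithLp.equiv 2 _)]
  simpa [Cardinal.mk_real] using Cardinal.power_nat_le Cardinal.aleph0_le_continuum

def IsOneRegular {n : ℕ} (a b : EuclideanSpace ℝ (Fin n)) : Prop :=
  (⨆ ν, |a ν - b ν|) ^ n ≤ (volume (box a b)).toReal

lemma toReal_volume_box {n : ℕ} {a b : EuclideanSpace ℝ (Fin n)} (hab : ∀ ν, a ν ≤ b ν) :
    (volume (box a b)).toReal = ∏ ν, (b ν - a ν) := by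
  have : box a b = WithLp.ofLp ⁻¹' Icc (WithLp.ofLp a) (WithLp.ofLp b) := by
    ext x; simp [box, Pi.le_def, forall_and]
  rw [this, (PiLp.volume_preserving_ofLp (Fin n)).measure_preimage
    measurableSet_Icc.nullMeasurableSet, Real.volume_Icc_pi_toReal hab]

lemma IsOneRegular.sub_eq_iSup {n : ℕ} {a b : EuclideanSpace ℝ (Fin n)} (hab : ∀ ν, a ν ≤ b ν)
    (h : IsOneRegular a b) (μ : Fin n) : b μ - a μ = ⨆ ν, |a ν - b ν| := by
  set M := ⨆ ν, |a ν - b ν|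
  have side_nonneg : ∀ ν, 0 ≤ b ν - a ν := fun ν ↦ sub_nonneg.2 (hab ν)
  have side_le : ∀ ν, b ν - a ν ≤ M := fun ν ↦ by
    rw [← abs_of_nonneg (side_nonneg ν), abs_sub_comm]
    exact le_ciSup (Set.finite_range fun ν ↦ |a ν - b ν|).bddAbove ν
  have card_erase : (Finset.univ.erase μ).card = n - 1 := by simp
  have key : M ^ (n - 1) * M ≤ M ^ (n - 1) * (b μ - a μ) :=
    calc M ^ (n - 1) * M = M ^ n := by rw [← pow_succ, Nat.sub_add_cancel μ.pos]
      _ ≤ ∏ ν, (b ν - a ν) := toReal_volume_box hab ▸ h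
      _ = (b μ - a μ) * ∏ ν ∈ Finset.univ.erase μ, (b ν - a ν) :=
          (Finset.mul_prod_erase _ _ (Finset.mem_univ μ)).symm
      _ ≤ (b μ - a μ) * M ^ (n - 1) := by
          grw [Finset.prod_le_prod (fun ν _ ↦ side_nonneg ν) (fun ν _ ↦ side_le ν),
            Finset.prod_const, card_erase]
          exact side_nonneg μ
      _ = _ := mul_comm _ _
  rcases ((side_nonneg μ).trans (side_le μ)).eq_or_lt with hM0 | hMpos
  · exact le_antisymm (side_le μ) (hM0 ▸ side_nonneg μ)
  · exact le_antisymm (side_le μ) (le_of_mul_le_mul_left key (pow_pos hMpos _))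

lemma IsOneRegular.sub_eq_sub {n : ℕ} {a b : EuclideanSpace ℝ (Fin n)} (hab : ∀ ν, a ν ≤ b ν)
    (h : IsOneRegular a b) (i j : Fin n) : b i - b j = a i - a j := by
  linarith [h.sub_eq_iSup hab i, h.sub_eq_iSup hab j]

lemma oneAC_of_apply_eq_of_isOneRegular {n l : ℕ} (hn : n ≠ 0)
    {f : EuclideanSpace ℝ (Fin n) → EuclideanSpace ℝ (Fin l)}
    (hf : ∀ a b, (∀ ν, a ν ≤ b ν) → IsOneRegular a b → f b = f a) : OneAC f :=
  fun ε hε ↦ ⟨1, one_pos, fun _ a b hab _ hreg _ ↦ by simpa [hf _ _ (hab _) (hreg _), hn] using hε⟩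

lemma LinearMap.measure_preimage_eq_zero_of_surjective {𝕜 E F : Type*} [NontriviallyNormedField 𝕜]
    [CompleteSpace 𝕜] [NormedAddCommGroup E] [MeasurableSpace E] [BorelSpace E] [NormedSpace 𝕜 E]
    [LocallyCompactSpace E] [NormedAddCommGroup F] [MeasurableSpace F] [BorelSpace F]
    [NormedSpace 𝕜 F] {L : E →ₗ[𝕜] F} (hL : Function.Surjective L) (μ : Measure E) (ν : Measure F)
    [μ.IsAddHaarMeasure] [ν.IsAddHaarMeasure] {s : Set F} (hs : MeasurableSet s) (hs0 : ν s = 0) :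
    μ (L ⁻¹' s) = 0 := by
  rw [measure_eq_zero_iff_ae_notMem] at hs0 ⊢
  exact (ae_comp_linearMap_mem_iff L μ ν hL hs.compl).2 hs0

def coordDiff {n : ℕ} (i j : Fin n) : EuclideanSpace ℝ (Fin n) →L[ℝ] ℝ :=
  EuclideanSpace.proj i - EuclideanSpace.proj j

@[simp]
lemma coordDiff_apply {n : ℕ} (i j : Fin n) (x : EuclideanSpace ℝ (Fin n)) :
    coordDiff i j x = x i - x j := rfl

lemma coordDiff_surjective {n : ℕ} {i j : Fin n} (hij : i ≠ j) :
    Function.Surjective (coordDiff i j) :=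
  fun t ↦ ⟨EuclideanSpace.single i t, by simp [hij.symm]⟩

lemma differentiableAt_indicator_comp_of_notMem {𝕜 E F X : Type*} [NontriviallyNormedField 𝕜]
    [NormedAddCommGroup E] [NormedSpace 𝕜 E] [NormedAddCommGroup F] [NormedSpace 𝕜 F]
    [TopologicalSpace X] {L : E → X} (hL : Continuous L) {C : Set X} (hC : IsClosed C)
    (g : X → F) {x : E} (hx : L x ∉ C) : DifferentiableAt 𝕜 (C.indicator g ∘ L) x := by
  have : C.indicator g ∘ L =ᶠ[𝓝 x] fun _ ↦ 0 :=
    (hC.isOpen_compl.preimage hL).mem_nhds hx |> eventually_of_mem <| fun y hy ↦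
      indicator_of_notMem hy g
  exact (differentiableAt_const 0).congr_of_eventuallyEq this

lemma exists_image_eq_univ_of_mk_le {α β : Type u} [Nonempty β] {s : Set α} (h : #β ≤ #s) :
    ∃ g : α → β, g '' s = univ := by
  classical
  obtain ⟨ι⟩ := h
  obtain ⟨φ, hφ⟩ : ∃ φ : s → β, Function.Surjective φ := ⟨_, Function.invFun_surjective ι.injective⟩
  refine ⟨fun x ↦ if hx : x ∈ s then φ ⟨x, hx⟩ else Classical.arbitrary β,
    eq_univ_of_forall fun y ↦ ?_⟩
  obtain ⟨⟨x, hx⟩, rfl⟩ := hφ y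
  exact ⟨x, hx, dif_pos hx⟩

theorem exists_oneAC_differentiable_ae_not_luzinN_general {n l : ℕ} (hn : 1 < n) :
    ∃ (f : EuclideanSpace ℝ (Fin n) → EuclideanSpace ℝ (Fin l))
      (U : Set (EuclideanSpace ℝ (Fin n))),
      OneAC f ∧ (∀ᵐ x ∂(volume : Measure (EuclideanSpace ℝ (Fin n))), DifferentiableAt ℝ f x) ∧
      volume U = 0 ∧ 0 < volume (f '' U) := by
  have hij : (⟨1, hn⟩ : Fin n) ≠ ⟨0, by omega⟩ := by simp
  set L := coordDiff (⟨1, hn⟩ : Fin n) ⟨0, by omega⟩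
  obtain ⟨g, hg⟩ : ∃ g : ℝ → EuclideanSpace ℝ (Fin l), g '' cantorSet = univ :=
    exists_image_eq_univ_of_mk_le (Cardinal.mk_cantorSet ▸ Cardinal.mk_euclideanSpace_le l)
  have hU : volume (L ⁻¹' cantorSet) = 0 :=
    L.toLinearMap.measure_preimage_eq_zero_of_surjective (coordDiff_surjective hij) _ _
      isClosed_cantorSet.measurableSet volume_cantorSet
  refine ⟨cantorSet.indicator g ∘ L, L ⁻¹' cantorSet, ?_, ?_, hU, ?_⟩
  · exact oneAC_of_apply_eq_of_isOneRegular (by omega) fun a b hab hreg ↦ by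
      simp [L, hreg.sub_eq_sub hab]
  · filter_upwards [measure_eq_zero_iff_ae_notMem.1 hU] with x hx using
      differentiableAt_indicator_comp_of_notMem L.continuous isClosed_cantorSet g hx
  · rw [image_comp, image_preimage_eq _ (coordDiff_surjective hij),
      image_congr fun _ ↦ indicator_of_mem (f := g), hg]
    exact Measure.measure_univ_pos.2 (NeZero.ne volume)

/-- For integers `n > 1` and `l ≥ 1`, there exist a function `f ∈ 1-AC(ℝⁿ,ℝˡ)` which is
differentiable almost everywhere, and a set `U ⊆ ℝⁿ` with `ℒⁿ(U) = 0` and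
`ℒˡ(f(U)) > 0`; in particular `f` fails the Luzin (N) property. -/
theorem exists_oneAC_differentiable_ae_not_luzinN {n l : ℕ} (hn : 1 < n) (hl : 1 ≤ l) :
    ∃ (f : EuclideanSpace ℝ (Fin n) → EuclideanSpace ℝ (Fin l))
      (U : Set (EuclideanSpace ℝ (Fin n))),
      OneAC f ∧ (∀ᵐ x ∂(volume : Measure (EuclideanSpace ℝ (Fin n))), DifferentiableAt ℝ f x) ∧
      volume U = 0 ∧ 0 < volume (f '' U) :=
  exists_oneAC_differentiable_ae_not_luzinN_general hn
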